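/- arXiv:1312.1250 — 9 statements merged into one kernel-verified Lean document; each statement's English description precedes it below -/
import Mathlib

section
/- Let R be a commutative ring and n ≥ 2 a positive integer. Then the diagonal extension R ⊆ R^n has FCP if and only if R is an Artinian ring. -/
/-!
An Artinian commutative ring is Noetherian (Hopkins–Levitzki), so the finite `R`-module `R^n`
has a submodule lattice that is well-founded in both directions; subalgebras are submodules, so
every chain of them is finite. Conversely, an ideal `I` gives the subalgebra of tuples that are
constant modulo `I`; for `n ≥ 2` this is strictly monotone in `I`, so a strictly descending chain
of ideals yields an infinite chain of subalgebras.
-/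

/-- A ring extension `R ⊆ S` (given by the algebra structure) has FCP if every chain
of `R`-subalgebras of `S` is finite. -/
def HasFCP (R S : Type*) [CommRing R] [CommRing S] [Algebra R S] : Prop :=
  ∀ C : Set (Subalgebra R S), IsChain (· ≤ ·) C → C.Finite

theorem IsChain.finite {α : Type*} [PartialOrder α] [WellFoundedLT α] [WellFoundedGT α]
    {s : Set α} (hs : IsChain (· ≤ ·) s) : s.Finite := by
  classical
  let := hs.linearOrder
  exact Set.finite_coe_iff.mp (Finite.of_wellFoundedLT_wellFoundedGT s)

theorem wellFoundedLT_of_forall_isChain_finite {α : Type*} [Preorder α]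
    (h : ∀ s : Set α, IsChain (· ≤ ·) s → s.Finite) : WellFoundedLT α := by
  refine ⟨RelEmbedding.wellFounded_iff_isEmpty.mpr ⟨fun f => ?_⟩⟩
  have hf : StrictAnti f := fun _ _ hij => f.map_rel_iff.mpr hij
  exact Set.infinite_range_of_injective hf.injective (h _ hf.antitone.isChain_range)

theorem hasFCP_of_isArtinianRing (R S : Type*) [CommRing R] [CommRing S] [Algebra R S]
    [IsArtinianRing R] [Module.Finite R S] : HasFCP R S := by
  have hemb := (Subalgebra.toSubmodule (R := R) (A := S)).strictMono
  have := hemb.wellFoundedLT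
  have := hemb.wellFoundedGT
  exact fun _ hC => hC.finite

theorem HasFCP.wellFoundedLT {R S : Type*} [CommRing R] [CommRing S] [Algebra R S]
    (h : HasFCP R S) : WellFoundedLT (Subalgebra R S) :=
  wellFoundedLT_of_forall_isChain_finite h

namespace Ideal

variable {R : Type*} [CommRing R] (ι : Type*)

def diagonalMod (I : Ideal R) : Subalgebra R (ι → R) :=
  (⊥ : Subalgebra R (ι → R ⧸ I)).comap (AlgHom.compLeft (Ideal.Quotient.mkₐ R I) ι)

variable {ι}

theorem mem_diagonalMod {I : Ideal R} {f : ι → R} :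
    f ∈ diagonalMod ι I ↔ ∃ r : R, ∀ i, Quotient.mk I (f i) = Quotient.mk I r := by
  simp [diagonalMod, Algebra.mem_bot, funext_iff, eq_comm]

theorem diagonalMod_strictMono [Nontrivial ι] : StrictMono (diagonalMod ι (R := R)) := by
  intro I J hIJ
  refine lt_of_le_of_ne (fun f hf => ?_) fun hEq => ?_
  · obtain ⟨r, hr⟩ := mem_diagonalMod.mp hf
    exact mem_diagonalMod.mpr ⟨r, fun i => Quotient.eq.mpr (hIJ.le (Quotient.eq.mp (hr i)))⟩
  · classical
    obtain ⟨j, hjJ, hjI⟩ := SetLike.exists_of_lt hIJ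
    obtain ⟨a, b, hab⟩ := exists_pair_ne ι
    have hJ : Pi.single a j ∈ diagonalMod ι J :=
      mem_diagonalMod.mpr ⟨0, fun i => by
        rcases eq_or_ne i a with rfl | hi <;> simp [Quotient.eq_zero_iff_mem, *]⟩
    obtain ⟨r, hr⟩ := mem_diagonalMod.mp (hEq ▸ hJ)
    have hab' := (hr a).trans (hr b).symm
    simp [hab.symm, Quotient.eq_zero_iff_mem] at hab'
    exact hjI hab'

end Ideal

theorem isArtinianRing_of_hasFCP_pi (R ι : Type*) [CommRing R] [Nontrivial ι]
    (h : HasFCP R (ι → R)) : IsArtinianRing R :=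
  have := h.wellFoundedLT
  (Ideal.diagonalMod_strictMono (ι := ι)).wellFoundedLT

/-- Let `R` be a commutative ring and `n ≥ 2`. The diagonal extension `R ⊆ R^n`
has FCP if and only if `R` is an Artinian ring. -/
theorem fcp_diagonal_power_iff_isArtinianRing (R : Type*) [CommRing R] (n : ℕ) (hn : 2 ≤ n) :
    HasFCP R (Fin n → R) ↔ IsArtinianRing R :=
  have : Nontrivial (Fin n) := Fin.nontrivial_iff_two_le.mpr hn
  ⟨isArtinianRing_of_hasFCP_pi R (Fin n), fun _ => hasFCP_of_isArtinianRing R _⟩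
end

section
/- Let K be a field and n > 1 a positive integer. Then the number of K-subalgebras of K^n (for the diagonal extension K ⊆ K^n) equals the n-th Bell number B_n; in particular K ⊆ K^n has FIP, and moreover K ⊆ K^n is a seminormal extension. -/
/-!
A `K`-subalgebra `A` of `K^ι` is determined by the equivalence relation "no element of `A`
separates `i` and `j`": for finite `ι`, `A` contains the indicator of each class (a product of
functions that are `1` at `i` and `0` at a point outside its class, obtained by rescaling a
separating element of `A`), hence every function constant on the classes. So subalgebras of
`K^n` correspond to equivalence relations on `Fin n`. Seminormality holds coordinatewise, since in a
field `b = b³ / b²`.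
-/

/-- An extension `R ⊆ S` is seminormal if every `b ∈ S` with `b², b³ ∈ R` lies in `R`. -/
def IsSeminormalExt (R S : Type*) [CommRing R] [CommRing S] [Algebra R S] : Prop :=
  ∀ b : S, b ^ 2 ∈ (algebraMap R S).range → b ^ 3 ∈ (algebraMap R S).range →
    b ∈ (algebraMap R S).range

/-- The `n`-th Bell number, as the number of equivalence relations on an `n`-element set. -/
noncomputable def bellNumber (n : ℕ) : ℕ := Nat.card (Setoid (Fin n))

instance Setoid.finite {α : Type*} [Finite α] : Finite (Setoid α) :=
  Finite.of_injective (fun s : Setoid α => s.r) fun _ _ h =>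
    Setoid.ext fun a b => Iff.of_eq (congrFun₂ h a b)

section CommSemiring

variable (K : Type*) {ι : Type*} [CommSemiring K]

def subalgebraOfSetoid (s : Setoid ι) : Subalgebra K (ι → K) where
  carrier := {f | ∀ i j, s i j → f i = f j}
  add_mem' hf hg i j hij := by simp only [Pi.add_apply, hf i j hij, hg i j hij]
  mul_mem' hf hg i j hij := by simp only [Pi.mul_apply, hf i j hij, hg i j hij]
  algebraMap_mem' _ _ _ _ := rfl

variable {K}

def setoidOfSubalgebra (A : Subalgebra K (ι → K)) : Setoid ι where
  r i j := ∀ f ∈ A, f i = f j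
  iseqv := ⟨fun _ _ _ => rfl, fun h f hf => (h f hf).symm,
    fun h₁ h₂ f hf => (h₁ f hf).trans (h₂ f hf)⟩

theorem setoidOfSubalgebra_apply {A : Subalgebra K (ι → K)} {i j : ι} :
    setoidOfSubalgebra A i j ↔ ∀ f ∈ A, f i = f j :=
  Iff.rfl

theorem le_subalgebraOfSetoid_setoidOfSubalgebra (A : Subalgebra K (ι → K)) :
    A ≤ subalgebraOfSetoid K (setoidOfSubalgebra A) :=
  fun f hf _ _ hij => hij f hf

theorem setoidOfSubalgebra_subalgebraOfSetoid [Nontrivial K] (s : Setoid ι) :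
    setoidOfSubalgebra (subalgebraOfSetoid K s) = s := by
  classical
  refine Setoid.ext fun i j => ⟨fun h => ?_, fun hij f hf => hf i j hij⟩
  let e : ι → K := fun k => if s i k then 1 else 0
  have he : e ∈ subalgebraOfSetoid K s := fun a b hab => by
    simp only [e, show s i a ↔ s i b from ⟨(s.trans · hab), (s.trans · (s.symm hab))⟩]
  by_contra hij
  simpa [e, s.refl i, hij] using h e he

end CommSemiring

section Field

variable {K ι : Type*} [Field K]

theorem exists_mem_apply_eq_one_apply_eq_zero (A : Subalgebra K (ι → K)) {i j : ι}
    (hij : ¬ setoidOfSubalgebra A i j) : ∃ g ∈ A, g i = 1 ∧ g j = 0 := by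
  obtain ⟨f, hfA, hf⟩ : ∃ f ∈ A, f i ≠ f j := by
    simpa [setoidOfSubalgebra_apply] using hij
  refine ⟨(f i - f j)⁻¹ • (f - algebraMap K (ι → K) (f j)),
    A.smul_mem (A.sub_mem hfA (A.algebraMap_mem _)) _, ?_, ?_⟩
  · simp [inv_mul_cancel₀ (sub_ne_zero.mpr hf)]
  · simp

theorem exists_mem_eq_indicator_class [Finite ι] (A : Subalgebra K (ι → K)) (i : ι) :
    ∃ e ∈ A, ∀ k,
      (setoidOfSubalgebra A i k → e k = 1) ∧ (¬ setoidOfSubalgebra A i k → e k = 0) := by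
  have := Fintype.ofFinite ι
  have hsep (j : ι) : ∃ g ∈ A, g i = 1 ∧ (¬ setoidOfSubalgebra A i j → g j = 0) := by
    by_cases hij : setoidOfSubalgebra A i j
    · exact ⟨1, A.one_mem, rfl, fun h => (h hij).elim⟩
    · obtain ⟨g, hgA, hgi, hgj⟩ := exists_mem_apply_eq_one_apply_eq_zero A hij
      exact ⟨g, hgA, hgi, fun _ => hgj⟩
  choose g hgA hgi hgj using hsep
  refine ⟨∏ j, g j, Subalgebra.prod_mem A fun j _ => hgA j,
    fun k => ⟨fun hik => ?_, fun hik => ?_⟩⟩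
  · rw [Finset.prod_apply]
    exact Finset.prod_eq_one fun j _ => (hik (g j) (hgA j)).symm.trans (hgi j)
  · rw [Finset.prod_apply]
    exact Finset.prod_eq_zero (Finset.mem_univ k) (hgj k hik)

theorem subalgebraOfSetoid_setoidOfSubalgebra [Finite ι] (A : Subalgebra K (ι → K)) :
    subalgebraOfSetoid K (setoidOfSubalgebra A) = A := by
  refine le_antisymm (fun f hf => ?_) (le_subalgebraOfSetoid_setoidOfSubalgebra A)
  set s := setoidOfSubalgebra A
  have := Fintype.ofFinite (Quotient s)
  choose e heA he using exists_mem_eq_indicator_class A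
  have hf_eq : f = ∑ c : Quotient s, f c.out • e c.out := by
    funext k
    rw [Finset.sum_apply, Finset.sum_eq_single ⟦k⟧]
    · have hk : s (⟦k⟧ : Quotient s).out k := Quotient.mk_out k
      simp [(he _ k).1 hk, hf _ _ hk]
    · intro c _ hc
      have : ¬ s c.out k := fun h => hc (by rw [← Quotient.out_eq c]; exact Quotient.sound h)
      simp [(he _ k).2 this]
    · simp
  rw [hf_eq]
  exact Subalgebra.sum_mem A fun c _ => A.smul_mem (heA c.out) _

variable (K ι) in
noncomputable def subalgebraEquivSetoid [Finite ι] : Subalgebra K (ι → K) ≃ Setoid ι where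
  toFun := setoidOfSubalgebra
  invFun := subalgebraOfSetoid K
  left_inv := subalgebraOfSetoid_setoidOfSubalgebra
  right_inv := setoidOfSubalgebra_subalgebraOfSetoid

/-- With `0 / 0 = 0` this also covers `c = 0`, where `x = 0`. -/
theorem eq_div_of_sq_eq_of_pow_three_eq {x c d : K} (hc : x ^ 2 = c) (hd : x ^ 3 = d) :
    x = d / c := by
  subst hc hd
  rcases eq_or_ne x 0 with rfl | hx
  · simp
  · field_simp

variable (K ι) in
theorem isSeminormalExt_pi : IsSeminormalExt K (ι → K) := fun _ ⟨c, hc⟩ ⟨d, hd⟩ =>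
  ⟨d / c, funext fun i =>
    (eq_div_of_sq_eq_of_pow_three_eq (congrFun hc i).symm (congrFun hd i).symm).symm⟩

end Field

theorem card_subalgebra_field_pow_general (K : Type*) [Field K] (n : ℕ) :
    Nat.card (Subalgebra K (Fin n → K)) = bellNumber n ∧
      Finite (Subalgebra K (Fin n → K)) ∧
      IsSeminormalExt K (Fin n → K) :=
  ⟨Nat.card_congr (subalgebraEquivSetoid K (Fin n)),
    Finite.of_equiv _ (subalgebraEquivSetoid K (Fin n)).symm, isSeminormalExt_pi K (Fin n)⟩

/-- Let `K` be a field and `n > 1`. The number of `K`-subalgebras of `K^n` equals the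
`n`-th Bell number; in particular `K ⊆ K^n` has FIP, and moreover it is seminormal. -/
theorem card_subalgebra_field_pow (K : Type*) [Field K] (n : ℕ) (hn : 1 < n) :
    Nat.card (Subalgebra K (Fin n → K)) = bellNumber n ∧
      Finite (Subalgebra K (Fin n → K)) ∧
      IsSeminormalExt K (Fin n → K) :=
  card_subalgebra_field_pow_general K n
end

section
/- Let R be a commutative ring with two proper ideals I and J such that I ∩ J = 0. Then the extension R ⊆ R/I × R/J (given by r ↦ (r mod I, r mod J)) is a Δ₀-extension, and it has FIP if and only if R/(I+J) has only finitely many ideals. -/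
/-!
Write `M = R/I × R/J`. A submodule `N ∋ 1` of `M` is closed under multiplication: lifting
`x.1 = r` and `y.2 = t` from `R`, one has `x * y = r • y + t • (x - r • 1)`. Hence the subalgebras
of `M` are exactly the submodules containing `R • 1`. The map `M → R/(I+J)`, `(a, b) ↦ a - b`, is
onto with kernel `R • 1`, so these submodules correspond to the `R`-submodules of `R/(I+J)`, which
are its ideals. Thus `[R, M]` is order isomorphic to the lattice of ideals of `R/(I+J)`.
-/

open Function

section SurjectiveAlgebraMaps

variable {R A B : Type*} [CommRing R] [Ring A] [Ring B] [Algebra R A] [Algebra R B]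

theorem Submodule.mul_mem_prod_of_one_le (hA : Surjective (algebraMap R A))
    (hB : Surjective (algebraMap R B)) {N : Submodule R (A × B)} (hN : 1 ≤ N) {x y : A × B}
    (hx : x ∈ N) (hy : y ∈ N) : x * y ∈ N := by
  obtain ⟨r, hr⟩ := hA x.1
  obtain ⟨t, ht⟩ := hB y.2
  have hxy : x * y = r • y + t • (x - r • 1) := by
    ext
    · simp [Algebra.smul_def, hr]
    · simp only [Prod.snd_mul, Prod.snd_add, Prod.smul_snd, Prod.snd_sub, Prod.snd_one]
      simp only [Algebra.smul_def, mul_one, ← ht]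
      rw [← Algebra.commutes t x.2, Algebra.commutes r (algebraMap R B t)]
      noncomm_ring
  have h1 : (1 : A × B) ∈ N := Submodule.one_le.mp hN
  rw [hxy]
  exact N.add_mem (N.smul_mem r hy) (N.smul_mem t (N.sub_mem hx (N.smul_mem r h1)))

noncomputable def Subalgebra.prodOrderIsoIciOne (hA : Surjective (algebraMap R A))
    (hB : Surjective (algebraMap R B)) :
    Subalgebra R (A × B) ≃o Set.Ici (1 : Submodule R (A × B)) where
  toFun T := ⟨Subalgebra.toSubmodule T, Submodule.one_le.mpr T.one_mem⟩
  invFun N := N.1.toSubalgebra (Submodule.one_le.mp N.2)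
    fun _ _ => Submodule.mul_mem_prod_of_one_le hA hB N.2
  left_inv T := T.toSubmodule_toSubalgebra
  right_inv N := Subtype.ext (N.1.toSubalgebra_toSubmodule _ _)
  map_rel_iff' := Subalgebra.toSubmodule.le_iff_le

end SurjectiveAlgebraMaps

noncomputable def Ideal.orderIsoSubmoduleOfSurjective {R S : Type*} [CommRing R] [CommRing S]
    [Algebra R S] (h : Surjective (algebraMap R S)) : Ideal S ≃o Submodule R S :=
  .ofSurjective (Submodule.restrictScalarsEmbedding R S S) fun N =>
    ⟨Submodule.span S N, by
      rw [Submodule.restrictScalarsEmbedding_apply, Submodule.restrictScalars_span R S h,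
        Submodule.span_eq]⟩

noncomputable def LinearMap.iciKerOrderIso {R M M₂ : Type*} [Ring R] [AddCommGroup M]
    [AddCommGroup M₂] [Module R M] [Module R M₂] (f : M →ₗ[R] M₂) (hf : Surjective f) :
    Set.Ici (LinearMap.ker f) ≃o Submodule R M₂ :=
  (Submodule.comapMkQRelIso _).symm.trans
    (Submodule.orderIsoMapComap (f.quotKerEquivOfSurjective hf))

namespace Ideal

variable {R : Type*} [CommRing R] (I J : Ideal R)

noncomputable def quotientPairDiff : (R ⧸ I) × (R ⧸ J) →ₗ[R] R ⧸ (I + J) :=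
  (Quotient.factorₐ R le_sup_left).toLinearMap.coprod
    (-(Quotient.factorₐ R le_sup_right).toLinearMap)

theorem quotientPairDiff_mk (r s : R) :
    quotientPairDiff I J (Quotient.mk I r, Quotient.mk J s) =
      Quotient.mk (I + J) (r - s) := by
  simp [quotientPairDiff, sub_eq_add_neg]

theorem quotientPairDiff_surjective : Surjective (quotientPairDiff I J) := by
  intro z
  obtain ⟨r, rfl⟩ := Quotient.mk_surjective z
  exact ⟨(Quotient.mk I r, Quotient.mk J 0), by rw [quotientPairDiff_mk, sub_zero]⟩

theorem ker_quotientPairDiff : LinearMap.ker (quotientPairDiff I J) = 1 := by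
  apply le_antisymm
  · rintro ⟨a, b⟩ hab
    obtain ⟨r, rfl⟩ := Quotient.mk_surjective a
    obtain ⟨s, rfl⟩ := Quotient.mk_surjective b
    rw [LinearMap.mem_ker, quotientPairDiff_mk, Quotient.eq_zero_iff_mem] at hab
    obtain ⟨i, hi, j, hj, hij⟩ := Submodule.mem_sup.mp hab
    refine Submodule.mem_one.mpr ⟨r - i, Prod.ext ?_ ?_⟩
    · refine Quotient.eq.mpr ?_
      simpa using I.neg_mem hi
    · refine Quotient.eq.mpr ?_
      rwa [show r - i - s = j by linear_combination -hij]
  · rw [Submodule.one_le, LinearMap.mem_ker]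
    exact (quotientPairDiff_mk I J 1 1).trans (by rw [sub_self, map_zero])

noncomputable def quotientProdSubalgebraOrderIso :
    Subalgebra R ((R ⧸ I) × (R ⧸ J)) ≃o Ideal (R ⧸ (I + J)) :=
  (Subalgebra.prodOrderIsoIciOne Quotient.mk_surjective Quotient.mk_surjective).trans <|
    (OrderIso.setCongr _ _ (by rw [ker_quotientPairDiff])).trans <|
      (LinearMap.iciKerOrderIso _ (quotientPairDiff_surjective I J)).trans
        (orderIsoSubmoduleOfSurjective Quotient.mk_surjective).symm

end Ideal

theorem delta0_and_fip_quotient_pair_general (R : Type*) [CommRing R] (I J : Ideal R) :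
    (∀ N : Submodule R ((R ⧸ I) × (R ⧸ J)), (1 : (R ⧸ I) × (R ⧸ J)) ∈ N →
        ∃ T : Subalgebra R ((R ⧸ I) × (R ⧸ J)), Subalgebra.toSubmodule T = N) ∧
      (Finite (Subalgebra R ((R ⧸ I) × (R ⧸ J))) ↔ Finite (Ideal (R ⧸ (I + J)))) := by
  refine ⟨fun N h1 => ?_, (Ideal.quotientProdSubalgebraOrderIso I J).toEquiv.finite_iff⟩
  obtain ⟨T, hT⟩ := (Subalgebra.prodOrderIsoIciOne Ideal.Quotient.mk_surjective
    Ideal.Quotient.mk_surjective).surjective ⟨N, Submodule.one_le.mpr h1⟩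
  exact ⟨T, congrArg Subtype.val hT⟩

/-- Let `I`, `J` be proper ideals of `R` with `I ∩ J = 0`. Then the extension
`R ⊆ R/I × R/J` is a Δ₀-extension (every `R`-submodule of `R/I × R/J` containing `R`,
equivalently containing `1`, is an `R`-subalgebra), and it has FIP if and only if
`R/(I+J)` has only finitely many ideals. -/
theorem delta0_and_fip_quotient_pair (R : Type*) [CommRing R] (I J : Ideal R)
    (hI : I ≠ ⊤) (hJ : J ≠ ⊤) (hIJ : I ⊓ J = ⊥) :
    (∀ N : Submodule R ((R ⧸ I) × (R ⧸ J)), (1 : (R ⧸ I) × (R ⧸ J)) ∈ N →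
        ∃ T : Subalgebra R ((R ⧸ I) × (R ⧸ J)), Subalgebra.toSubmodule T = N) ∧
      (Finite (Subalgebra R ((R ⧸ I) × (R ⧸ J))) ↔ Finite (Ideal (R ⧸ (I + J)))) :=
  delta0_and_fip_quotient_pair_general R I J
end

section
/- Let (R,M) be a quasi-local ring with R/M infinite, and let I, J be ideals of R with I ∩ J = 0. (1) If I + J = R, then |[R, R/I × R/J]| = 1. (2) If I + J ≠ R and S := R/(I+J) is a SPIR whose maximal ideal has nilpotency index p (the least p > 0 with p-th power zero), then |[R, R/I × R/J]| = p + 1. In particular, if (R,M) is itself a SPIR whose maximal ideal has nilpotency index q, then |[R, R²]| = q + 1. -/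
/-!
An `R`-subalgebra of `R/I × R/J` contains the image of `R`, which is exactly the kernel of the
surjective `R`-linear map `(a, b) ↦ a - b` onto `T := R/(I+J)`. Hence these subalgebras correspond
to the `R`-submodules of `T`, i.e. to the ideals of `T` (the preimage of an ideal is closed under
multiplication since `ab - a'b' = a(b - b') + b'(a - a')`). So `|[R, R/I × R/J]|` is the number of
ideals of `T`: one when `I + J = R`, and `p + 1` when `T` is a SPIR of index `p`, whose ideals are
exactly `M^0, …, M^p`: an ideal contained in `M^i = (m^i)` but not in `M^(i+1)` contains some
`u m^i` with `u` a unit.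
-/

/-- `(R, M)` is a special principal ideal ring (SPIR): a principal ideal ring, not a field,
whose unique nonzero prime ideal is `M`, with `M` nilpotent. -/
def IsSPIR (R : Type*) [CommRing R] (M : Ideal R) : Prop :=
  IsPrincipalIdealRing R ∧ ¬ IsField R ∧ M.IsPrime ∧ M ≠ ⊥ ∧
    (∀ P : Ideal R, P.IsPrime → P ≠ ⊥ → P = M) ∧ ∃ p : ℕ, 0 < p ∧ M ^ p = ⊥

section Pullback

variable {R A B T : Type*} [CommRing R] [CommRing A] [CommRing B] [CommRing T]
  [Algebra R A] [Algebra R B] [Algebra R T] (f : A →ₐ[R] T) (g : B →ₐ[R] T)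

def AlgHom.pullbackDiff : A × B →ₗ[R] T := f.toLinearMap.coprod (-g.toLinearMap)

@[simp]
theorem AlgHom.pullbackDiff_apply (z : A × B) : f.pullbackDiff g z = f z.1 - g z.2 := by
  simp [pullbackDiff, sub_eq_add_neg]

/-- For `K = ⊥` this is the fibre product `A ×_T B`. -/
def Ideal.pullbackSubalgebra (K : Ideal T) : Subalgebra R (A × B) where
  carrier := f.pullbackDiff g ⁻¹' K
  mul_mem' {z w} hz hw := by
    have hmul : f (z * w).1 - g (z * w).2 =
        f z.1 * (f w.1 - g w.2) + g w.2 * (f z.1 - g z.2) := by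
      simp only [Prod.fst_mul, Prod.snd_mul, map_mul]; ring
    simp only [Set.mem_preimage, AlgHom.pullbackDiff_apply, SetLike.mem_coe] at hz hw ⊢
    rw [hmul]
    exact K.add_mem (K.mul_mem_left _ hw) (K.mul_mem_left _ hz)
  add_mem' {z w} hz hw := by
    simpa only [Set.mem_preimage, SetLike.mem_coe, map_add] using K.add_mem hz hw
  algebraMap_mem' r := by simp

theorem Ideal.toSubmodule_pullbackSubalgebra (K : Ideal T) :
    Subalgebra.toSubmodule (K.pullbackSubalgebra f g) =
      (K.restrictScalars R).comap (f.pullbackDiff g) := rfl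

variable {f g}

theorem Ideal.pullbackSubalgebra_bijective (hT : Function.Surjective (algebraMap R T))
    (hpull : ∀ a b, f a = g b → ∃ r, algebraMap R A r = a ∧ algebraMap R B r = b) :
    Function.Bijective (Ideal.pullbackSubalgebra f g) := by
  have hdiff : Function.Surjective (f.pullbackDiff g) := fun t ↦ by
    obtain ⟨r, rfl⟩ := hT t
    exact ⟨(algebraMap R A r, 0), by simp⟩
  refine ⟨fun K L hKL ↦ ?_, fun S ↦ ?_⟩
  · apply Submodule.restrictScalars_injective R
    apply Submodule.comap_injective_of_surjective hdiff
    simpa only [Ideal.toSubmodule_pullbackSubalgebra] using congrArg Subalgebra.toSubmodule hKL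
  · have hker : LinearMap.ker (f.pullbackDiff g) ≤ Subalgebra.toSubmodule S := by
      rintro ⟨a, b⟩ hab
      obtain ⟨r, rfl, rfl⟩ := hpull a b (sub_eq_zero.mp (by simpa using hab))
      exact S.algebraMap_mem r
    refine ⟨Ideal.span ((Subalgebra.toSubmodule S).map (f.pullbackDiff g)), ?_⟩
    apply Subalgebra.toSubmodule_injective
    rw [Ideal.toSubmodule_pullbackSubalgebra, Ideal.span, Submodule.restrictScalars_span R T hT,
      Submodule.span_eq, Submodule.comap_map_eq, sup_eq_left.mpr hker]

theorem card_subalgebra_prod_eq_card_ideal (hT : Function.Surjective (algebraMap R T))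
    (hpull : ∀ a b, f a = g b → ∃ r, algebraMap R A r = a ∧ algebraMap R B r = b) :
    Nat.card (Subalgebra R (A × B)) = Nat.card (Ideal T) :=
  (Nat.card_eq_of_bijective _ (Ideal.pullbackSubalgebra_bijective hT hpull)).symm

end Pullback

theorem card_subalgebra_prod_quotient {R : Type*} [CommRing R] (I J : Ideal R) :
    Nat.card (Subalgebra R ((R ⧸ I) × (R ⧸ J))) = Nat.card (Ideal (R ⧸ (I + J))) := by
  refine card_subalgebra_prod_eq_card_ideal (f := Ideal.Quotient.factorₐ R le_sup_left)
    (g := Ideal.Quotient.factorₐ R le_sup_right) Ideal.Quotient.mk_surjective ?_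
  rintro ⟨r⟩ ⟨s⟩ hrs
  obtain ⟨i, hi, j, hj, hij⟩ := Submodule.mem_sup.mp (Ideal.Quotient.eq.mp hrs)
  refine ⟨r - i, Ideal.Quotient.eq.mpr (by simpa using I.neg_mem hi), Ideal.Quotient.eq.mpr ?_⟩
  rwa [show r - i - s = j by linear_combination -hij]

theorem card_subalgebra_prod_self {R : Type*} [CommRing R] :
    Nat.card (Subalgebra R (R × R)) = Nat.card (Ideal R) :=
  card_subalgebra_prod_eq_card_ideal (f := AlgHom.id R R) (g := AlgHom.id R R)
    Function.surjective_id fun a _ h ↦ ⟨a, rfl, h⟩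

section PowersOfAnIdeal

variable {T : Type*} [CommRing T] {M : Ideal T} {p : ℕ}

theorem Ideal.pow_eq_bot_of_pow_eq_pow {i j : ℕ} (hij : i < j) (heq : M ^ i = M ^ j)
    (hp : M ^ p = ⊥) : M ^ i = ⊥ := by
  have hsucc : M ^ (i + 1) = M ^ i :=
    le_antisymm (Ideal.pow_le_pow_right i.le_succ) (heq ▸ Ideal.pow_le_pow_right hij)
  have hstable (n : ℕ) : M ^ (i + n) = M ^ i := by
    induction n with
    | zero => rfl
    | succ n ih => rw [← add_assoc, pow_succ, ih, ← pow_succ, hsucc]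
  rw [← hstable p, eq_bot_iff, ← hp]
  exact Ideal.pow_le_pow_right (p.le_add_left i)

theorem Ideal.pow_injOn_Iic (hp : M ^ p = ⊥) (hne : ∀ q < p, M ^ q ≠ ⊥) :
    Set.InjOn (M ^ ·) (Set.Iic p) := by
  intro i hi j hj hij
  rcases lt_trichotomy i j with hlt | heq | hlt
  · exact absurd (Ideal.pow_eq_bot_of_pow_eq_pow hlt hij hp) (hne i (hlt.trans_le hj))
  · exact heq
  · exact absurd (Ideal.pow_eq_bot_of_pow_eq_pow hlt hij.symm hp) (hne j (hlt.trans_le hi))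

end PowersOfAnIdeal

namespace IsLocalRing

variable {T : Type*} [CommRing T] [IsLocalRing T]

theorem le_maximalIdeal_pow_succ {m : T} (hm : maximalIdeal T = Ideal.span {m}) {K : Ideal T}
    {i : ℕ} (hK : K ≤ maximalIdeal T ^ i) (hne : K ≠ maximalIdeal T ^ i) :
    K ≤ maximalIdeal T ^ (i + 1) := by
  have hpow : maximalIdeal T ^ i = Ideal.span {m ^ i} := by rw [hm, Ideal.span_singleton_pow]
  intro x hx
  obtain ⟨c, rfl⟩ := Ideal.mem_span_singleton'.mp (hpow ▸ hK hx)
  by_cases hc : IsUnit c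
  · obtain ⟨u, rfl⟩ := hc
    refine absurd (le_antisymm hK ?_) hne
    rw [hpow, Ideal.span_le, Set.singleton_subset_iff]
    simpa using K.mul_mem_left (↑u⁻¹) hx
  · rw [pow_succ']
    exact Ideal.mul_mem_mul ((mem_maximalIdeal c).mpr hc)
      (hpow ▸ Ideal.mem_span_singleton_self (m ^ i))

theorem exists_eq_maximalIdeal_pow {m : T} (hm : maximalIdeal T = Ideal.span {m}) {p : ℕ}
    (hp : maximalIdeal T ^ p = ⊥) (K : Ideal T) : ∃ i ≤ p, K = maximalIdeal T ^ i := by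
  by_contra! hK
  have hle (i : ℕ) (hi : i ≤ p) : K ≤ maximalIdeal T ^ i := by
    induction i with
    | zero => simp
    | succ i ih => exact le_maximalIdeal_pow_succ hm (ih (by omega)) (hK i (by omega))
  exact hK p le_rfl (le_antisymm (hle p le_rfl) (hp ▸ bot_le))

theorem card_ideal_eq (hM : (maximalIdeal T).IsPrincipal) {p : ℕ} (hp : maximalIdeal T ^ p = ⊥)
    (hne : ∀ q < p, maximalIdeal T ^ q ≠ ⊥) : Nat.card (Ideal T) = p + 1 := by
  obtain ⟨m, hm⟩ := hM
  have hbij : Function.Bijective fun i : Fin (p + 1) ↦ maximalIdeal T ^ (i : ℕ) := by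
    refine ⟨fun i j hij ↦ Fin.ext (Ideal.pow_injOn_Iic hp hne i.is_le j.is_le hij),
      fun K ↦ ?_⟩
    obtain ⟨i, hi, rfl⟩ := exists_eq_maximalIdeal_pow hm hp K
    exact ⟨⟨i, by omega⟩, rfl⟩
  rw [← Nat.card_eq_of_bijective _ hbij, Nat.card_fin]

end IsLocalRing

namespace IsSPIR

variable {T : Type*} [CommRing T] {M : Ideal T}

theorem isMaximal (h : IsSPIR T M) : M.IsMaximal := by
  obtain ⟨-, -, hprime, hne, huniq, -⟩ := h
  obtain ⟨N, hN, hMN⟩ := Ideal.exists_le_maximal M hprime.ne_top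
  rwa [huniq N hN.isPrime (ne_bot_of_le_ne_bot hne hMN)] at hN

theorem isLocalRing (h : IsSPIR T M) : IsLocalRing T := by
  refine .of_unique_max_ideal ⟨M, h.isMaximal, fun N hN ↦ ?_⟩
  obtain ⟨-, hnf, -, hne, huniq, -⟩ := h
  refine huniq N hN.isPrime fun hN0 ↦ hnf ?_
  have : Nontrivial T := not_subsingleton_iff_nontrivial.mp fun _ ↦ hne (Subsingleton.elim _ _)
  exact Ring.isField_iff_maximal_bot.mpr (hN0 ▸ hN)

theorem card_ideal (h : IsSPIR T M) {p : ℕ} (hp : M ^ p = ⊥)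
    (hne : ∀ q, 0 < q → q < p → M ^ q ≠ ⊥) : Nat.card (Ideal T) = p + 1 := by
  have := h.isLocalRing
  obtain rfl := IsLocalRing.eq_maximalIdeal h.isMaximal
  refine IsLocalRing.card_ideal_eq (h.1.principal _) hp fun q hq ↦ ?_
  rcases q.eq_zero_or_pos with rfl | hq0
  · simp
  · exact hne q hq0 hq

end IsSPIR

theorem card_subalgebra_quotient_pair_general (R : Type*) [CommRing R] [IsLocalRing R]
    (I J : Ideal R) :
    (I + J = ⊤ → Nat.card (Subalgebra R ((R ⧸ I) × (R ⧸ J))) = 1) ∧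
      (I + J ≠ ⊤ → ∀ (M' : Ideal (R ⧸ (I + J))) (p : ℕ), IsSPIR (R ⧸ (I + J)) M' →
        0 < p → M' ^ p = ⊥ → (∀ q : ℕ, 0 < q → q < p → M' ^ q ≠ ⊥) →
        Nat.card (Subalgebra R ((R ⧸ I) × (R ⧸ J))) = p + 1) ∧
      (∀ q : ℕ, IsSPIR R (IsLocalRing.maximalIdeal R) → 0 < q →
        IsLocalRing.maximalIdeal R ^ q = ⊥ →
        (∀ m : ℕ, 0 < m → m < q → IsLocalRing.maximalIdeal R ^ m ≠ ⊥) →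
        Nat.card (Subalgebra R (R × R)) = q + 1) := by
  refine ⟨fun hIJ ↦ ?_, fun _ M' p hM' _ hp hne ↦ ?_, fun q hR _ hq hne ↦ ?_⟩
  · have : Subsingleton (R ⧸ (I + J)) := Ideal.Quotient.subsingleton_iff.mpr hIJ
    rw [card_subalgebra_prod_quotient, Nat.card_eq_one_iff_unique]
    exact ⟨inferInstance, ⟨⊥⟩⟩
  · rw [card_subalgebra_prod_quotient, hM'.card_ideal hp hne]
  · rw [card_subalgebra_prod_self, hR.card_ideal hq hne]

/-- Let `(R, M)` be a quasi-local ring with infinite residue field and `I ∩ J = 0`.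
(1) If `I + J = R` then `R ⊆ R/I × R/J` has exactly one intermediate algebra.
(2) If `I + J ≠ R` and `R/(I+J)` is a SPIR whose maximal ideal has nilpotency index `p`,
then there are exactly `p + 1` intermediate algebras.
In particular, if `(R, M)` is itself a SPIR with nilpotency index `q`, then
`|[R, R²]| = q + 1`. -/
theorem card_subalgebra_quotient_pair (R : Type*) [CommRing R] [IsLocalRing R]
    (hres : Infinite (R ⧸ IsLocalRing.maximalIdeal R))
    (I J : Ideal R) (hIJ : I ⊓ J = ⊥) :
    (I + J = ⊤ → Nat.card (Subalgebra R ((R ⧸ I) × (R ⧸ J))) = 1) ∧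
      (I + J ≠ ⊤ → ∀ (M' : Ideal (R ⧸ (I + J))) (p : ℕ), IsSPIR (R ⧸ (I + J)) M' →
        0 < p → M' ^ p = ⊥ → (∀ q : ℕ, 0 < q → q < p → M' ^ q ≠ ⊥) →
        Nat.card (Subalgebra R ((R ⧸ I) × (R ⧸ J))) = p + 1) ∧
      (∀ q : ℕ, IsSPIR R (IsLocalRing.maximalIdeal R) → 0 < q →
        IsLocalRing.maximalIdeal R ^ q = ⊥ →
        (∀ m : ℕ, 0 < m → m < q → IsLocalRing.maximalIdeal R ^ m ≠ ⊥) →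
        Nat.card (Subalgebra R (R × R)) = q + 1) :=
  card_subalgebra_quotient_pair_general R I J
end

section
/- Let R be a commutative ring and {I₁,…,Iₙ}, with n > 2, a separating family of ideals of R. Then the extension R ⊆ ∏_{j=1}^n (R/I_j) is a minimal extension if and only if the following condition (†) holds: there exist j₀ ≠ k₀ in {1,…,n} such that I_{j₀} + I_{k₀} is a maximal ideal of R and I_j + I_k = R for every other pair (j,k) with j ≠ k. Moreover, if (†) holds, then I_j + ∩_{k≠j} I_k = ∩_{k≠j} (I_j + I_k) for each j ∈ {1,…,n}. -/
/-!
Let `J = I j₀ + I k₀` and let `E` be the subalgebra of tuples whose `j₀`- and `k₀`-components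
agree modulo `J`; it contains the image `⊥` of `R`, and is proper when `J` is. Under (†) the
Chinese remainder theorem gives `E = ⊥`. Since `E` is the kernel of `x ↦ x j₀ - x k₀`, an
`R`-linear map to the simple module `R ⧸ J`, any `s ∈ T \ ⊥` lets every `t` be written as
`c • s` plus an element of `E = ⊥`, so `T = ⊤`.
Conversely, if the extension is minimal, some `I j₀ + I k₀` is proper (otherwise `R` maps onto
the product), and for every proper `K ⊇ I j₀ + I k₀` the analogous equalizer modulo `K` is `⊥`:
testing it on the tuples `(x, 0, …, 0)` with `x ∈ K` gives `K = J`, and on the unit vectors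
`e_i`, `i ∉ {j₀, k₀}`, shows that all other pairs are comaximal.
The last identity follows from `I_j + I_q L = I_j + I_q` whenever `I_j + L = R`.
-/

/-- Condition (†) for a family of ideals: there is a pair `j₀ ≠ k₀` with `I j₀ + I k₀`
maximal, while `I j + I k = R` for every other pair of distinct indices. -/
def DaggerCond {R : Type*} [CommRing R] {n : ℕ} (I : Fin n → Ideal R) : Prop :=
  ∃ j₀ k₀ : Fin n, j₀ ≠ k₀ ∧ (I j₀ + I k₀).IsMaximal ∧
    ∀ j k : Fin n, j ≠ k → ({j, k} : Finset (Fin n)) ≠ {j₀, k₀} → I j + I k = ⊤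

theorem Subalgebra.eq_bot_or_eq_top_of_equalizer_eq_bot {R A B : Type*} [CommRing R] [Ring A]
    [Algebra R A] [Ring B] [Algebra R B] [IsSimpleModule R B] {f g : A →ₐ[R] B}
    (h : AlgHom.equalizer f g = ⊥) (T : Subalgebra R A) : T = ⊥ ∨ T = ⊤ := by
  refine or_iff_not_imp_left.mpr fun hT => eq_top_iff.mpr fun t _ => ?_
  obtain ⟨s, hsT, hs⟩ := SetLike.exists_of_lt (bot_lt_iff_ne_bot.mpr hT)
  have hfg : f s - g s ≠ 0 :=
    sub_ne_zero.mpr fun he => hs (h ▸ (AlgHom.mem_equalizer f g s).mpr he)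
  obtain ⟨c, hc⟩ := IsSimpleModule.toSpanSingleton_surjective R hfg (f t - g t)
  have hE : t - c • s ∈ AlgHom.equalizer f g := by
    simp only [LinearMap.toSpanSingleton_apply, smul_sub] at hc
    rw [AlgHom.mem_equalizer, map_sub, map_sub, map_smul, map_smul, ← sub_eq_zero,
      sub_sub_sub_comm, hc, sub_self]
  rw [h] at hE
  simpa using add_mem (bot_le (a := T) hE) (T.smul_mem hsT c)

namespace Ideal

open Finset

variable {R ι : Type*} [CommRing R] (I : ι → Ideal R)

theorem mem_bot_pi_quotient_iff {x : Π i, R ⧸ I i} :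
    x ∈ (⊥ : Subalgebra R (Π i, R ⧸ I i)) ↔ ∃ r : R, ∀ i, Quotient.mk (I i) r = x i := by
  simp only [Algebra.mem_bot, Set.mem_range, funext_iff]
  rfl

section DecidableEq

variable [DecidableEq ι]

theorem mem_sup_of_single_mem_bot {j k : ι} (hjk : j ≠ k) {x : R}
    (h : Pi.single j (Quotient.mk (I j) x) ∈ (⊥ : Subalgebra R (Π i, R ⧸ I i))) :
    x ∈ I j ⊔ I k := by
  obtain ⟨r, hr⟩ := (mem_bot_pi_quotient_iff I).mp h
  have hxr : x - r ∈ I j := Quotient.eq.mp (by simpa using (hr j).symm)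
  have hr' : r ∈ I k := Quotient.eq_zero_iff_mem.mp (by simpa [hjk.symm] using hr k)
  simpa using add_mem (mem_sup_left hxr) (mem_sup_right hr')

variable [Fintype ι]

theorem single_mem_bot_of_sup_eq_top {j : ι} (h : ∀ k, k ≠ j → I j ⊔ I k = ⊤)
    (z : R ⧸ I j) : Pi.single j z ∈ (⊥ : Subalgebra R (Π i, R ⧸ I i)) := by
  obtain ⟨a, rfl⟩ := Quotient.mk_surjective z
  have h1 : (1 : R) ∈ I j ⊔ ⨅ k ∈ univ.erase j, I k := by
    rw [sup_iInf_eq_top fun k hk => h k (ne_of_mem_erase hk)]; exact Submodule.mem_top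
  obtain ⟨p, hp, q, hq, hpq⟩ := Submodule.mem_sup.mp h1
  simp only [Submodule.mem_iInf] at hq
  refine (mem_bot_pi_quotient_iff I).mpr ⟨q * a, fun k => ?_⟩
  rcases eq_or_ne k j with rfl | hk
  · rw [Pi.single_eq_same, Quotient.eq, show q * a - a = -(p * a) by linear_combination a * hpq]
    exact neg_mem (mul_mem_right a _ hp)
  · rw [Pi.single_eq_of_ne hk, Quotient.eq_zero_iff_mem]
    exact mul_mem_right a _ (hq k (mem_erase.mpr ⟨hk, mem_univ k⟩))

theorem mem_bot_of_sup_eq_top {x : Π i, R ⧸ I i}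
    (hx : ∀ i, x i ≠ 0 → ∀ k, k ≠ i → I i ⊔ I k = ⊤) :
    x ∈ (⊥ : Subalgebra R (Π i, R ⧸ I i)) := by
  rw [← univ_sum_single x]
  refine Subalgebra.sum_mem _ fun i _ => ?_
  by_cases hi : x i = 0
  · simp [hi]
  · exact single_mem_bot_of_sup_eq_top I (hx i hi) (x i)

end DecidableEq

variable {I} in
def quotientEqualizer (j k : ι) {K : Ideal R} (hj : I j ≤ K) (hk : I k ≤ K) :
    Subalgebra R (Π i, R ⧸ I i) :=
  AlgHom.equalizer ((Quotient.factorₐ R hj).comp (Pi.evalAlgHom R _ j))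
    ((Quotient.factorₐ R hk).comp (Pi.evalAlgHom R _ k))

section Equalizer

variable {I} {j k : ι} {K : Ideal R} (hj : I j ≤ K) (hk : I k ≤ K)

theorem mem_quotientEqualizer {x : Π i, R ⧸ I i} :
    x ∈ quotientEqualizer j k hj hk ↔ Quotient.factor hj (x j) = Quotient.factor hk (x k) :=
  Iff.rfl

variable [DecidableEq ι]

theorem single_mem_quotientEqualizer {i : ι} (hij : i ≠ j) (hik : i ≠ k) (z : R ⧸ I i) :
    Pi.single i z ∈ quotientEqualizer j k hj hk := by
  simp [mem_quotientEqualizer, hij.symm, hik.symm]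

theorem single_mk_mem_quotientEqualizer_iff (hjk : j ≠ k) {x : R} :
    Pi.single j (Quotient.mk (I j) x) ∈ quotientEqualizer j k hj hk ↔ x ∈ K := by
  simp [mem_quotientEqualizer, hjk.symm, Quotient.factor_mk, Quotient.eq_zero_iff_mem]

theorem quotientEqualizer_ne_top (hjk : j ≠ k) (hK : K ≠ ⊤) :
    quotientEqualizer j k hj hk ≠ ⊤ := fun h => hK <| (eq_top_iff_one K).mpr <|
  (single_mk_mem_quotientEqualizer_iff hj hk hjk).mp (h ▸ Algebra.mem_top)

theorem le_sup_of_quotientEqualizer_eq_bot (hjk : j ≠ k) (h : quotientEqualizer j k hj hk = ⊥) :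
    K ≤ I j ⊔ I k := fun _ hx =>
  mem_sup_of_single_mem_bot _ hjk <| h ▸ (single_mk_mem_quotientEqualizer_iff hj hk hjk).mpr hx

theorem sup_eq_top_of_quotientEqualizer_eq_bot (h : quotientEqualizer j k hj hk = ⊥) {i l : ι}
    (hij : i ≠ j) (hik : i ≠ k) (hil : i ≠ l) : I i ⊔ I l = ⊤ :=
  (eq_top_iff_one _).mpr <| mem_sup_of_single_mem_bot _ hil <|
    h ▸ by simpa using single_mem_quotientEqualizer hj hk hij hik 1

end Equalizer

variable [DecidableEq ι] [Fintype ι]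

theorem quotientEqualizer_sup_eq_bot {j k : ι}
    (h : ∀ i, i ≠ j → i ≠ k → ∀ l, l ≠ i → I i ⊔ I l = ⊤) :
    quotientEqualizer j k (le_sup_left : I j ≤ I j ⊔ I k) le_sup_right = ⊥ := by
  refine le_antisymm (fun x hx => ?_) bot_le
  obtain ⟨a, ha⟩ := Quotient.mk_surjective (x j)
  obtain ⟨b, hb⟩ := Quotient.mk_surjective (x k)
  rw [mem_quotientEqualizer, ← ha, ← hb, Quotient.factor_mk, Quotient.factor_mk,
    Quotient.eq] at hx
  obtain ⟨u, hu, v, hv, huv⟩ := Submodule.mem_sup.mp hx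
  have hrj : Quotient.mk (I j) (a - u) = x j := by
    rw [← ha, Quotient.eq, sub_sub_cancel_left]; exact neg_mem hu
  have hrk : Quotient.mk (I k) (a - u) = x k := by
    rw [← hb, Quotient.eq, show a - u - b = v by linear_combination -huv]; exact hv
  have hx' : x - algebraMap R _ (a - u) ∈ (⊥ : Subalgebra R (Π i, R ⧸ I i)) := by
    refine mem_bot_of_sup_eq_top I fun i hi => h i ?_ ?_
    · rintro rfl
      exact hi (by rw [Pi.sub_apply, Pi.algebraMap_apply, Quotient.algebraMap_eq, hrj, sub_self])
    · rintro rfl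
      exact hi (by rw [Pi.sub_apply, Pi.algebraMap_apply, Quotient.algebraMap_eq, hrk, sub_self])
  simpa using add_mem hx' (Subalgebra.algebraMap_mem _ (a - u))

theorem sup_iInf_erase_eq_iInf_sup {j q : ι} (hqj : q ≠ j)
    (h : ∀ k, k ≠ j → k ≠ q → I j ⊔ I k = ⊤) :
    I j ⊔ ⨅ k ∈ univ.erase j, I k = ⨅ k ∈ univ.erase j, (I j ⊔ I k) := by
  refine le_antisymm (le_iInf₂ fun k hk => sup_le_sup_left (biInf_le _ hk) _) ?_
  have hcop : I j ⊔ ⨅ k ∈ (univ.erase j).erase q, I k = ⊤ :=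
    sup_iInf_eq_top fun k hk => h k (ne_of_mem_erase (mem_of_mem_erase hk)) (ne_of_mem_erase hk)
  have hprod : (⨅ k ∈ (univ.erase j).erase q, I k) * I q ≤ ⨅ k ∈ univ.erase j, I k := by
    refine mul_le_inf.trans (le_iInf₂ fun k hk => ?_)
    rcases eq_or_ne k q with rfl | hkq
    · exact inf_le_right
    · exact inf_le_left.trans (biInf_le _ (mem_erase.mpr ⟨hkq, hk⟩))
  calc ⨅ k ∈ univ.erase j, (I j ⊔ I k)
      ≤ I j ⊔ I q := biInf_le _ (mem_erase.mpr ⟨hqj, mem_univ q⟩)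
    _ = I j ⊔ (⨅ k ∈ (univ.erase j).erase q, I k) * I q := (sup_mul_eq_of_coprime_left hcop).symm
    _ ≤ I j ⊔ ⨅ k ∈ univ.erase j, I k := sup_le_sup_left hprod _

end Ideal

theorem daggerCond_iff {R : Type*} [CommRing R] {n : ℕ} (I : Fin n → Ideal R) :
    DaggerCond I ↔ ∃ j₀ k₀, j₀ ≠ k₀ ∧ (I j₀ ⊔ I k₀).IsMaximal ∧
      ∀ i, i ≠ j₀ → i ≠ k₀ → ∀ l, l ≠ i → I i ⊔ I l = ⊤ := by
  refine exists₂_congr fun j₀ k₀ => and_congr_right fun hne => and_congr_right fun _ =>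
    ⟨fun h i hij hik l hli => h i l hli.symm fun he => ?_, fun h j k hjk hpair => ?_⟩
  · have : i ∈ ({j₀, k₀} : Finset (Fin n)) := he ▸ Finset.mem_insert_self i {l}
    simp_all
  · by_cases hj : j ≠ j₀ ∧ j ≠ k₀
    · exact h j hj.1 hj.2 k hjk.symm
    by_cases hk : k ≠ j₀ ∧ k ≠ k₀
    · exact (sup_comm (I j) (I k)).trans (h k hk.1 hk.2 j hjk)
    exact (hpair (by grind)).elim

theorem daggerCond_of_forall_eq_bot_or_eq_top {R : Type*} [CommRing R] {n : ℕ}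
    (I : Fin n → Ideal R) (hne_top : (⊥ : Subalgebra R (Π j, R ⧸ I j)) ≠ ⊤)
    (hmin : ∀ T : Subalgebra R (Π j, R ⧸ I j), T = ⊥ ∨ T = ⊤) : DaggerCond I := by
  obtain ⟨j₀, k₀, hne, hJ⟩ : ∃ j k, j ≠ k ∧ I j ⊔ I k ≠ ⊤ := by
    by_contra! h
    exact hne_top (eq_top_iff.mpr fun x _ =>
      Ideal.mem_bot_of_sup_eq_top I fun i _ k hk => h i k hk.symm)
  have hE : ∀ K (hj : I j₀ ≤ K) (hk : I k₀ ≤ K), K ≠ ⊤ →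
      Ideal.quotientEqualizer j₀ k₀ hj hk = ⊥ :=
    fun K hj hk hK => (hmin _).resolve_right (Ideal.quotientEqualizer_ne_top hj hk hne hK)
  refine (daggerCond_iff I).mpr ⟨j₀, k₀, hne, Ideal.isMaximal_def.mpr ⟨hJ, fun K hK => ?_⟩,
    fun i hij hik l hil => Ideal.sup_eq_top_of_quotientEqualizer_eq_bot _ _
      (hE _ le_sup_left le_sup_right hJ) hij hik hil.symm⟩
  by_contra hK'
  exact hK.not_ge (Ideal.le_sup_of_quotientEqualizer_eq_bot _ _ hne
    (hE K (le_sup_left.trans hK.le) (le_sup_right.trans hK.le) hK'))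

theorem sup_iInf_erase_eq_iInf_sup_of_daggerCond {R : Type*} [CommRing R] {n : ℕ}
    {I : Fin n → Ideal R} (hD : DaggerCond I) (j : Fin n) :
    I j ⊔ ⨅ k ∈ Finset.univ.erase j, I k = ⨅ k ∈ Finset.univ.erase j, (I j ⊔ I k) := by
  obtain ⟨j₀, k₀, hne, -, hout⟩ := (daggerCond_iff I).mp hD
  rcases eq_or_ne j j₀ with rfl | hj₀
  · exact Ideal.sup_iInf_erase_eq_iInf_sup I hne.symm fun k hk hk₀ =>
      (sup_comm _ _).trans (hout k hk hk₀ j hk.symm)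
  refine Ideal.sup_iInf_erase_eq_iInf_sup I hj₀.symm fun k hk hkj₀ => ?_
  rcases eq_or_ne j k₀ with rfl | hjk₀
  · exact (sup_comm _ _).trans (hout k hkj₀ hk j hk.symm)
  · exact hout j hj₀ hjk₀ k hk

theorem minimal_separating_family_iff_general (R : Type*) [CommRing R] (n : ℕ)
    (I : Fin n → Ideal R) :
    (((⊥ : Subalgebra R (∀ j, R ⧸ I j)) ≠ ⊤ ∧
        ∀ T : Subalgebra R (∀ j, R ⧸ I j), T = ⊥ ∨ T = ⊤) ↔ DaggerCond I) ∧
      (DaggerCond I →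
        ∀ j, I j + ⨅ k ∈ Finset.univ.erase j, I k = ⨅ k ∈ Finset.univ.erase j, (I j + I k)) := by
  refine ⟨⟨fun ⟨hne_top, hmin⟩ => daggerCond_of_forall_eq_bot_or_eq_top I hne_top hmin,
    fun hD => ?_⟩, sup_iInf_erase_eq_iInf_sup_of_daggerCond⟩
  obtain ⟨j₀, k₀, hne, hmax, hout⟩ := (daggerCond_iff I).mp hD
  have hE := Ideal.quotientEqualizer_sup_eq_bot I hout
  have : IsSimpleModule R (R ⧸ (I j₀ ⊔ I k₀)) := isSimpleModule_iff_isCoatom.mpr hmax.out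
  exact ⟨fun h => Ideal.quotientEqualizer_ne_top _ _ hne hmax.ne_top (hE.trans h),
    Subalgebra.eq_bot_or_eq_top_of_equalizer_eq_bot hE⟩

/-- Let `{I₁,…,Iₙ}`, `n > 2`, be a separating family of ideals of `R`. Then the extension
`R ⊆ ∏ⱼ R/Iⱼ` is a minimal extension iff condition (†) holds. Moreover, if (†) holds, then
`Iⱼ + ∩_{k≠j} Iₖ = ∩_{k≠j} (Iⱼ + Iₖ)` for each `j`. -/
theorem minimal_separating_family_iff (R : Type*) [CommRing R] (n : ℕ) (hn : 2 < n)
    (I : Fin n → Ideal R) (hproper : ∀ j, I j ≠ ⊤) (hsep : ⨅ j, I j = ⊥) :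
    (((⊥ : Subalgebra R (∀ j, R ⧸ I j)) ≠ ⊤ ∧
        ∀ T : Subalgebra R (∀ j, R ⧸ I j), T = ⊥ ∨ T = ⊤) ↔ DaggerCond I) ∧
      (DaggerCond I →
        ∀ j, I j + ⨅ k ∈ Finset.univ.erase j, I k = ⨅ k ∈ Finset.univ.erase j, (I j + I k)) :=
  minimal_separating_family_iff_general R n I
end

section
/- Let R be a commutative ring and n > 1 an integer. Then the diagonal extension R ⊆ R^n has FIP if and only if R is an FMIR and, in case R is a ΣFMIR, n = 2. -/
/-- `R` is a ΣFMIR: a ring with finitely many ideals such that the localization of `R` at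
some maximal ideal is an infinite SPIR. -/
def IsSigmaFMIR (R : Type*) [CommRing R] : Prop :=
  Finite (Ideal R) ∧ ∃ (M : Ideal R) (hM : M.IsMaximal),
    haveI := hM.isPrime
    Infinite (Localization.AtPrime M) ∧
      IsSPIR (Localization.AtPrime M) (IsLocalRing.maximalIdeal (Localization.AtPrime M))

/-!
Tuples that are constant modulo an ideal `I` form a subalgebra of `Rⁿ` determined by `I`, so FIP
forces finitely many ideals; for `n = 2` conversely a subalgebra is determined by the ideal of the
differences `x 0 - x 1`. FIP passes to localizations and, as `R` has finitely many maximal ideals,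
is detected by the localizations at them. A local ring with finitely many ideals is finite, a field
(where a subalgebra of `kⁿ` contains the indicator of every level set of its elements, by Lagrange
interpolation, hence is spanned by its idempotents), or an infinite SPIR: an infinite residue field
leaves room for only one dimension in the cotangent space. In an infinite SPIR a nonzero `u` with
`u² = 0` gives, for `n ≥ 3`, one subalgebra `T[(u, a u, 0, …)]` per residue class of `a`.
-/

namespace Ideal

variable {R : Type*} [CommRing R] (ι : Type*)

def constModSubalgebra (I : Ideal R) : Subalgebra R (ι → R) where
  carrier := {x | ∀ i j, x i - x j ∈ I}
  mul_mem' {a b} ha hb i j := by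
    rw [Pi.mul_apply, Pi.mul_apply,
      show a i * b i - a j * b j = a i * (b i - b j) + b j * (a i - a j) by ring]
    exact add_mem (I.mul_mem_left _ (hb i j)) (I.mul_mem_left _ (ha i j))
  add_mem' {a b} ha hb i j := by
    rw [Pi.add_apply, Pi.add_apply, show a i + b i - (a j + b j) = (a i - a j) + (b i - b j) by ring]
    exact add_mem (ha i j) (hb i j)
  algebraMap_mem' r i j := by simp

variable {ι}

theorem constModSubalgebra_injective [Nontrivial ι] :
    Function.Injective (constModSubalgebra (R := R) ι) := by
  classical
  obtain ⟨i, j, hij⟩ := exists_pair_ne ι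
  suffices ∀ I J : Ideal R, constModSubalgebra ι I ≤ constModSubalgebra ι J → I ≤ J from
    fun I J h ↦ le_antisymm (this I J h.le) (this J I h.ge)
  intro I J h x hx
  have hsingle : Pi.single i x ∈ constModSubalgebra ι I := fun k l ↦ by
    simp only [Pi.single_apply]
    split_ifs <;> simp [hx]
  simpa [hij.symm] using h hsingle i j

end Ideal

theorem finite_ideal_of_finite_subalgebra_pi {R : Type*} [CommRing R] (ι : Type*) [Nontrivial ι]
    [Finite (Subalgebra R (ι → R))] : Finite (Ideal R) :=
  .of_injective _ (Ideal.constModSubalgebra_injective (R := R) (ι := ι))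

namespace Subalgebra

variable {R : Type*} [CommRing R]

def diffIdeal (A : Subalgebra R (Fin 2 → R)) : Ideal R :=
  (toSubmodule A).map (LinearMap.proj (R := R) (φ := fun _ ↦ R) 0 - LinearMap.proj 1)

theorem diffIdeal_injective : Function.Injective (diffIdeal (R := R)) := by
  suffices ∀ A B : Subalgebra R (Fin 2 → R), A.diffIdeal ≤ B.diffIdeal → A ≤ B from
    fun A B h ↦ le_antisymm (this A B h.le) (this B A h.ge)
  intro A B h x hx
  obtain ⟨v, hv, hvx⟩ := h ⟨x, hx, rfl⟩
  simp only [LinearMap.sub_apply, LinearMap.coe_proj, Function.eval] at hvx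
  have : x = v + algebraMap R _ (x 0 - v 0) := by
    ext i
    fin_cases i
    · simp
    · show x 1 = v 1 + (x 0 - v 0)
      linear_combination hvx
  rw [this]
  exact B.add_mem hv (B.algebraMap_mem _)

theorem finite_fin_two [Finite (Ideal R)] : Finite (Subalgebra R (Fin 2 → R)) :=
  .of_injective _ diffIdeal_injective

end Subalgebra

section Localization

variable {R T B B' : Type*} [CommRing R] [CommRing T] [Algebra R T] (S : Submonoid R)
  [IsLocalization S T] [CommRing B] [Algebra R B] [CommRing B'] [Algebra R B'] [Algebra T B']
  [IsScalarTower R T B'] (φ : B →ₐ[R] B') [IsLocalizedModule S φ.toLinearMap]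

include S in
theorem Subalgebra.comap_restrictScalars_injective :
    Function.Injective fun C : Subalgebra T B' ↦ (C.restrictScalars R).comap φ := by
  intro C D h
  apply Subalgebra.toSubmodule_injective
  apply (Submodule.localized'gi T S φ.toLinearMap).u_injective
  exact congr_arg Subalgebra.toSubmodule h

theorem Subalgebra.toSubmodule_adjoin_image (A : Subalgebra R B) :
    toSubmodule (Algebra.adjoin T (φ '' A)) = (toSubmodule A).localized' T S φ.toLinearMap := by
  rw [Algebra.adjoin_eq_span, Submodule.localized'_eq_span]
  congr
  exact congr_arg SetLike.coe (Submonoid.closure_eq (A.toSubmonoid.map φ))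

end Localization

instance IsLocalization.isLocalizedModule_compLeft {R T : Type*} [CommRing R] [CommRing T]
    [Algebra R T] (S : Submonoid R) [IsLocalization S T] (ι : Type*) [Finite ι] :
    IsLocalizedModule S ((Algebra.ofId R T).compLeft ι).toLinearMap :=
  IsLocalizedModule.pi S fun _ ↦ Algebra.linearMap R T

theorem IsLocalization.finite_ideal {R : Type*} [CommRing R] (S : Submonoid R) (T : Type*)
    [CommRing T] [Algebra R T] [IsLocalization S T] [Finite (Ideal R)] : Finite (Ideal T) :=
  .of_injective _ (IsLocalization.orderEmbedding S T).injective

section Pi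

variable {R : Type*} [CommRing R] (ι : Type*) [Finite ι]

theorem finite_subalgebra_pi_localization (S : Submonoid R) (T : Type*) [CommRing T] [Algebra R T]
    [IsLocalization S T] [Finite (Subalgebra R (ι → R))] : Finite (Subalgebra T (ι → T)) :=
  .of_injective _ (Subalgebra.comap_restrictScalars_injective S ((Algebra.ofId R T).compLeft ι))

theorem finite_subalgebra_pi_of_localization [Finite {P : Ideal R // P.IsMaximal}]
    (h : ∀ (P : Ideal R) [P.IsMaximal],
      Finite (Subalgebra (Localization.AtPrime P) (ι → Localization.AtPrime P))) :
    Finite (Subalgebra R (ι → R)) := by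
  let φ (P : Ideal R) [P.IsMaximal] := (Algebra.ofId R (Localization.AtPrime P)).compLeft ι
  have (P : {P : Ideal R // P.IsMaximal}) : P.1.IsMaximal := P.2
  have := fun P : {P : Ideal R // P.IsMaximal} ↦ h P.1
  refine .of_injective (fun A (P : {P : Ideal R // P.IsMaximal}) ↦
    Algebra.adjoin (Localization.AtPrime P.1) (φ P.1 '' A)) fun A B hAB ↦ ?_
  refine Subalgebra.toSubmodule_injective <| Submodule.eq_of_localization_maximal
    (fun P _ ↦ Localization.AtPrime P) (fun P _ ↦ ι → Localization.AtPrime P)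
    (fun P _ ↦ (φ P).toLinearMap) fun P hP ↦ ?_
  rw [← Subalgebra.toSubmodule_adjoin_image, ← Subalgebra.toSubmodule_adjoin_image]
  exact congr_arg Subalgebra.toSubmodule (congr_fun hAB ⟨P, hP⟩)

end Pi

theorem Pi.sum_smul_indicator_levelSet {ι R : Type*} [Fintype ι] [Semiring R] [DecidableEq R]
    (x : ι → R) : ∑ c ∈ Finset.univ.image x, c • {i | x i = c}.indicator (1 : ι → R) = x := by
  ext i
  rw [Finset.sum_apply, Finset.sum_eq_single (x i)]
  · simp
  · intro c _ hc
    simp [Set.indicator_of_notMem (show i ∉ {j | x j = c} from Ne.symm hc)]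
  · exact fun h ↦ absurd (Finset.mem_image_of_mem x (Finset.mem_univ i)) h

namespace Subalgebra

variable {k ι : Type*} [Field k] [Finite ι]

theorem indicator_levelSet_mem {A : Subalgebra k (ι → k)} {x : ι → k} (hx : x ∈ A) (c : k) :
    {i | x i = c}.indicator 1 ∈ A := by
  classical
  have := Fintype.ofFinite ι
  have hvals (i : ι) : x i ∈ Finset.univ.image x := Finset.mem_image_of_mem x (Finset.mem_univ i)
  have : {i | x i = c}.indicator 1 =
      Polynomial.aeval x (Lagrange.basis (Finset.univ.image x) id c) := by
    ext i
    simp only [Polynomial.aeval_pi_apply, Polynomial.coe_aeval_eq_eval]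
    by_cases hi : x i = c
    · rw [Set.indicator_of_mem (show i ∈ {i | x i = c} from hi), hi]
      exact (Lagrange.eval_basis_self (v := id) (Set.injOn_id _) (hi ▸ hvals i)).symm
    · rw [Set.indicator_of_notMem (show i ∉ {i | x i = c} from hi)]
      exact (Lagrange.eval_basis_of_ne (v := id) (Ne.symm hi) (hvals i)).symm
  rw [this]
  exact Algebra.adjoin_singleton_le hx (Polynomial.aeval_mem_adjoin_singleton k x)

theorem finite_pi_field : Finite (Subalgebra k (ι → k)) := by
  classical
  have := Fintype.ofFinite ι
  refine .of_injective (fun A : Subalgebra k (ι → k) ↦ {s : Set ι | s.indicator 1 ∈ A}) ?_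
  suffices ∀ A B : Subalgebra k (ι → k),
      {s : Set ι | s.indicator 1 ∈ A} ⊆ {s | s.indicator 1 ∈ B} → A ≤ B from
    fun A B h ↦ le_antisymm (this A B h.subset) (this B A h.superset)
  intro A B h x hx
  rw [← Pi.sum_smul_indicator_levelSet x]
  exact B.sum_mem fun c _ ↦ B.smul_mem (h (indicator_levelSet_mem hx c)) c

end Subalgebra

theorem Algebra.exists_eq_of_mem_adjoin_of_mul_self_eq_zero {R A : Type*} [CommRing R]
    [CommRing A] [Algebra R A] {v y : A} (hv : v * v = 0) (hy : y ∈ Algebra.adjoin R {v}) :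
    ∃ c d : R, y = algebraMap R A c + d • v := by
  induction hy using Algebra.adjoin_induction with
  | mem x hx => exact ⟨0, 1, by rw [Set.mem_singleton_iff.mp hx]; simp⟩
  | algebraMap r => exact ⟨r, 0, by simp⟩
  | add x y _ _ hx hy =>
    obtain ⟨c, d, rfl⟩ := hx
    obtain ⟨c', d', rfl⟩ := hy
    exact ⟨c + c', d + d', by rw [map_add, add_smul]; abel⟩
  | mul x y _ _ hx hy =>
    obtain ⟨c, d, rfl⟩ := hx
    obtain ⟨c', d', rfl⟩ := hy
    refine ⟨c * c', c * d' + d * c', ?_⟩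
    simp only [Algebra.smul_def, map_mul, map_add]
    linear_combination (algebraMap R A d * algebraMap R A d') * hv

theorem exists_mul_self_eq_zero_of_isNilpotent {R : Type*} [MonoidWithZero R] {x : R}
    (hx : IsNilpotent x) (hx0 : x ≠ 0) : ∃ u : R, u ≠ 0 ∧ u * u = 0 := by
  have : ¬ IsReduced R := fun _ ↦ hx0 hx.eq_zero
  simpa [isReduced_iff_pow_one_lt 2 one_lt_two, sq, and_comm] using this

section SquareZero

variable {T ι : Type*} [CommRing T] [DecidableEq ι] {u : T} {i j l : ι}

def sqZeroTuple (u : T) (i j : ι) (a : T) : ι → T :=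
  Pi.single i u + Pi.single j (a * u)

theorem sqZeroTuple_mul_self (hu : u * u = 0) (a : T) :
    sqZeroTuple u i j a * sqZeroTuple u i j a = 0 := by
  have hu2 : u ^ 2 = 0 := by rw [sq, hu]
  ext k
  simp only [sqZeroTuple, Pi.mul_apply, Pi.add_apply, Pi.single_apply, Pi.zero_apply]
  split_ifs <;> ring_nf <;> simp [hu2]

theorem sub_mul_eq_zero_of_adjoin_sqZeroTuple_eq (hu : u * u = 0) (hij : i ≠ j) (hil : i ≠ l)
    (hjl : j ≠ l) {a b : T}
    (h : Algebra.adjoin T {sqZeroTuple u i j a} = Algebra.adjoin T {sqZeroTuple u i j b}) :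
    (a - b) * u = 0 := by
  obtain ⟨c, d, hcd⟩ := Algebra.exists_eq_of_mem_adjoin_of_mul_self_eq_zero
    (sqZeroTuple_mul_self hu a) (h ▸ Algebra.self_mem_adjoin_singleton T (sqZeroTuple u i j b))
  have hi : u = c + d * u := by simpa [sqZeroTuple, hij] using congr_fun hcd i
  have hj : b * u = c + d * (a * u) := by simpa [sqZeroTuple, hij.symm] using congr_fun hcd j
  have hl : 0 = c := by simpa [sqZeroTuple, hil.symm, hjl.symm] using congr_fun hcd l
  linear_combination a * hi - hj + (1 - a) * hl

theorem infinite_subalgebra_pi_of_mul_self_eq_zero [IsLocalRing T]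
    [Infinite (IsLocalRing.ResidueField T)] (hu0 : u ≠ 0) (hu : u * u = 0) (hij : i ≠ j)
    (hil : i ≠ l) (hjl : j ≠ l) : Infinite (Subalgebra T (ι → T)) := by
  have hres := IsLocalRing.residue_surjective (R := T)
  refine .of_injective (fun z ↦ Algebra.adjoin T {sqZeroTuple u i j (Function.surjInv hres z)})
    fun z w h ↦ ?_
  rw [← Function.surjInv_eq hres z, ← Function.surjInv_eq hres w, ← sub_eq_zero, ← map_sub,
    IsLocalRing.residue_eq_zero_iff, IsLocalRing.mem_maximalIdeal, mem_nonunits_iff]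
  exact fun hunit ↦ hu0 <| hunit.mul_right_eq_zero.mp <|
    sub_mul_eq_zero_of_adjoin_sqZeroTuple_eq hu hij hil hjl h

end SquareZero

theorem infinite_submodule_of_one_lt_finrank {K V : Type*} [Field K] [Infinite K]
    [AddCommGroup V] [Module K V] (h : 1 < Module.finrank K V) : Infinite (Submodule K V) := by
  have := Module.finite_of_finrank_pos (zero_lt_one.trans h)
  obtain ⟨x, hx⟩ := Module.finrank_pos_iff_exists_ne_zero.mp (zero_lt_one.trans h)
  obtain ⟨y, hxy⟩ := exists_linearIndependent_pair_of_one_lt_finrank h hx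
  refine .of_injective (fun c : K ↦ K ∙ (x + c • y)) fun c d hcd ↦ ?_
  obtain ⟨a, ha⟩ := Submodule.mem_span_singleton.mp
    (hcd.ge (Submodule.mem_span_singleton_self (x + d • y)))
  have := LinearIndependent.pair_iff.mp hxy (a - 1) (a * c - d) (by
    rw [sub_smul, sub_smul, one_smul, mul_smul, ← sub_eq_zero.mpr ha, smul_add]; abel)
  rw [sub_eq_zero, sub_eq_zero] at this
  simpa [this.1] using this.2

namespace IsLocalRing

variable {T : Type*} [CommRing T] [IsLocalRing T]

theorem finite_of_finite_residueField [IsArtinianRing T] [Finite (ResidueField T)] :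
    Finite T := by
  obtain ⟨p, hp⟩ := (isArtinianRing_iff_isNilpotent_maximalIdeal T).mp inferInstance
  have : Finite (T ⧸ (⊥ : Ideal T)) := finite_quotient_iff.mpr ⟨p, hp.le⟩
  exact .of_equiv _ (RingEquiv.quotientBot T).toEquiv

theorem infinite_residueField [IsArtinianRing T] [Infinite T] : Infinite (ResidueField T) := by
  rw [← not_finite_iff_infinite]
  intro
  have := finite_of_finite_residueField (T := T)
  exact not_finite T

theorem eq_maximalIdeal_of_isArtinianRing [IsArtinianRing T] (P : Ideal T) [P.IsPrime] :
    P = maximalIdeal T :=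
  eq_maximalIdeal (IsArtinianRing.isMaximal_of_isPrime P)

variable (T) in
theorem submodule_cotangentSpace_injective :
    Function.Injective fun N : Submodule (ResidueField T) (CotangentSpace T) ↦
      ((N.restrictScalars T).comap (maximalIdeal T).toCotangent).map (maximalIdeal T).subtype :=
  (Submodule.map_injective_of_injective (maximalIdeal T).injective_subtype).comp <|
    (Submodule.comap_injective_of_surjective (maximalIdeal T).toCotangent_surjective).comp <|
      Submodule.restrictScalars_injective _ _ _

theorem isPrincipal_maximalIdeal [Finite (Ideal T)] [Infinite (ResidueField T)] :
    (maximalIdeal T).IsPrincipal := by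
  rw [← finrank_cotangentSpace_le_one_iff]
  by_contra! h
  have := infinite_submodule_of_one_lt_finrank h
  exact not_finite_iff_infinite.mpr (.of_injective _ (submodule_cotangentSpace_injective T))
    ‹Finite (Ideal T)›

theorem isSPIR_maximalIdeal [Finite (Ideal T)] [Infinite T] (h : ¬ IsField T) :
    IsSPIR T (maximalIdeal T) := by
  have := infinite_residueField (T := T)
  obtain ⟨p, hp⟩ := (isArtinianRing_iff_isNilpotent_maximalIdeal T).mp inferInstance
  refine ⟨.of_prime fun P _ ↦ ?_, h, inferInstance, ?_, fun P _ _ ↦ ?_, p + 1, p.succ_pos, ?_⟩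
  · rw [eq_maximalIdeal_of_isArtinianRing P]
    exact isPrincipal_maximalIdeal
  · exact fun hM ↦ h (isField_iff_maximalIdeal_eq.mpr hM)
  · exact eq_maximalIdeal_of_isArtinianRing P
  · rw [pow_succ, hp, Ideal.zero_eq_bot, Ideal.bot_mul]

theorem finite_subalgebra_pi [Finite (Ideal T)] (ι : Type*) [Finite ι]
    (h : Infinite T → ¬ IsSPIR T (maximalIdeal T)) : Finite (Subalgebra T (ι → T)) := by
  rcases finite_or_infinite T with hT | hT
  · exact .of_injective _ SetLike.coe_injective
  · by_cases hf : IsField T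
    · let := hf.toField
      exact Subalgebra.finite_pi_field
    · exact absurd (isSPIR_maximalIdeal hf) (h hT)

theorem infinite_subalgebra_pi_of_isSPIR [Finite (Ideal T)] [Infinite T]
    (h : IsSPIR T (maximalIdeal T)) {ι : Type*} [DecidableEq ι] {i j l : ι} (hij : i ≠ j)
    (hil : i ≠ l) (hjl : j ≠ l) : Infinite (Subalgebra T (ι → T)) := by
  obtain ⟨-, -, -, hM, -, p, -, hp⟩ := h
  obtain ⟨x, hxM, hx0⟩ := Submodule.exists_mem_ne_zero_of_ne_bot hM
  have hx : IsNilpotent x := ⟨p, by simpa [hp] using Ideal.pow_mem_pow hxM p⟩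
  obtain ⟨u, hu0, hu⟩ := exists_mul_self_eq_zero_of_isNilpotent hx hx0
  have := infinite_residueField (T := T)
  exact infinite_subalgebra_pi_of_mul_self_eq_zero hu0 hu hij hil hjl

end IsLocalRing

theorem finite_subalgebra_pi_of_not_isSigmaFMIR {R : Type*} [CommRing R] [Finite (Ideal R)]
    (h : ¬ IsSigmaFMIR R) (ι : Type*) [Finite ι] : Finite (Subalgebra R (ι → R)) :=
  finite_subalgebra_pi_of_localization ι fun P hP ↦
    have := IsLocalization.finite_ideal P.primeCompl (Localization.AtPrime P)
    IsLocalRing.finite_subalgebra_pi ι fun hinf hspir ↦ h ⟨‹_›, P, hP, hinf, hspir⟩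

/-- Let `R` be a ring and `n > 1`. Then the diagonal extension `R ⊆ R^n` has FIP iff
`R` has finitely many ideals and, in case `R` is a ΣFMIR, `n = 2`. -/
theorem fip_power_iff (R : Type*) [CommRing R] (n : ℕ) (hn : 1 < n) :
    Finite (Subalgebra R (Fin n → R)) ↔
      Finite (Ideal R) ∧ (IsSigmaFMIR R → n = 2) := by
  constructor
  · intro hfip
    have : Nontrivial (Fin n) := Fin.nontrivial_iff_two_le.mpr hn
    refine ⟨finite_ideal_of_finite_subalgebra_pi (Fin n), fun ⟨_, M, hM, hinf, hspir⟩ ↦ ?_⟩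
    by_contra hn2
    have := IsLocalization.finite_ideal M.primeCompl (Localization.AtPrime M)
    have := finite_subalgebra_pi_localization (Fin n) M.primeCompl (Localization.AtPrime M)
    have := IsLocalRing.infinite_subalgebra_pi_of_isSPIR hspir (i := (⟨0, by omega⟩ : Fin n))
      (j := ⟨1, hn⟩) (l := ⟨2, by omega⟩) (by simp) (by simp) (by simp)
    exact not_finite (Subalgebra (Localization.AtPrime M) (Fin n → Localization.AtPrime M))
  · rintro ⟨_, hsigma⟩
    rcases eq_or_ne n 2 with rfl | hn2
    · exact Subalgebra.finite_fin_two
    · exact finite_subalgebra_pi_of_not_isSigmaFMIR (mt hsigma hn2) (Fin n)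
end

section
/- Let M be a module over a commutative ring R. Then the extension R ⊆ R(+)M has FIP if and only if M is an FMS module (M has only finitely many R-submodules). In this case, |[R, R(+)M]| = ν(M), the number of R-submodules of M. -/
/-!
An `R`-subalgebra `S` of `R(+)M` contains `inl R`, and `x = inl x.fst + inr x.snd`, so `S` is
determined by the submodule `{m | inr m ∈ S}`. Conversely, for a submodule `N`, the set
`R(+)N` is closed under `(r, m)(s, n) = (rs, rn + sm)`. The two constructions are mutually
inverse and monotone, so `[R, R(+)M]` is order-isomorphic to the lattice of submodules of `M`.
-/

namespace TrivSqZeroExt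

variable {R M : Type*} [CommRing R] [AddCommGroup M] [Module R M] [Module Rᵐᵒᵖ M]
  [IsCentralScalar R M]

variable (R) in
def subalgebraOfSubmodule (N : Submodule R M) : Subalgebra R (TrivSqZeroExt R M) where
  carrier := {x | x.snd ∈ N}
  mul_mem' {a b} (ha : a.snd ∈ N) (hb : b.snd ∈ N) := by
    change (a * b).snd ∈ N
    rw [snd_mul, op_smul_eq_smul]
    exact N.add_mem (N.smul_mem _ hb) (N.smul_mem _ ha)
  add_mem' {a b} (ha : a.snd ∈ N) (hb : b.snd ∈ N) := N.add_mem ha hb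
  algebraMap_mem' r := by
    change (algebraMap R (TrivSqZeroExt R M) r).snd ∈ N
    rw [algebraMap_eq_inl, snd_inl]
    exact N.zero_mem

@[simp]
theorem mem_subalgebraOfSubmodule {N : Submodule R M} {x : TrivSqZeroExt R M} :
    x ∈ subalgebraOfSubmodule R N ↔ x.snd ∈ N :=
  Iff.rfl

theorem inr_snd_mem_iff {S : Subalgebra R (TrivSqZeroExt R M)} {x : TrivSqZeroExt R M} :
    inr x.snd ∈ S ↔ x ∈ S := by
  conv_rhs => rw [← inl_fst_add_inr_snd_eq x]
  exact (add_mem_cancel_left (S.algebraMap_mem x.fst)).symm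

variable (R M) in
def submoduleOrderIsoSubalgebra : Submodule R M ≃o Subalgebra R (TrivSqZeroExt R M) where
  toFun := subalgebraOfSubmodule R
  invFun S := (Subalgebra.toSubmodule S).comap (inrHom R M)
  left_inv N := by
    ext m
    simp
  right_inv S := by
    ext x
    simp [inr_snd_mem_iff]
  map_rel_iff' {N N'} := by
    refine ⟨fun h m hm => ?_, fun h x hx => h hx⟩
    simpa using h (show inr m ∈ subalgebraOfSubmodule R N by simpa)

end TrivSqZeroExt

/-- Let `M` be a module over `R`. The extension `R ⊆ R(+)M` into the idealization of `M`
(the trivial square-zero extension) has FIP iff `M` has only finitely many `R`-submodules,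
and in this case the number of intermediate `R`-algebras equals the number of
`R`-submodules of `M`. -/
theorem fip_idealization_iff (R M : Type*) [CommRing R] [AddCommGroup M] [Module R M]
    [Module Rᵐᵒᵖ M] [IsCentralScalar R M] :
    (Finite (Subalgebra R (TrivSqZeroExt R M)) ↔ Finite (Submodule R M)) ∧
      (Finite (Submodule R M) →
        Nat.card (Subalgebra R (TrivSqZeroExt R M)) = Nat.card (Submodule R M)) := by
  let e := (TrivSqZeroExt.submoduleOrderIsoSubalgebra R M).toEquiv
  exact ⟨(Equiv.finite_iff e).symm, fun _ => (Nat.card_congr e).symm⟩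
end

section
/- Let (R,P) be a quasi-local ring and M an R-module, with C := (0:M). Then M is an FMS module if and only if the following two conditions hold: (1) M is finitely generated, and cyclic when the residue field R/P is infinite; (2) R/C is an FMIR. -/
/-!
If the residue field `R/P` is finite, a module with finitely many submodules has finite length
and all its composition factors are `R/P`, so it is a finite set; then `R/C`, which embeds in
`End(M)`, is finite. Conversely, `R/C` has finite length over itself, hence is finite, and a
finitely generated `R/C`-module is then finite as well.

If `R/P` is infinite, `M/PM` is a vector space over an infinite field with finitely many subspaces.
Such a space is not a finite union of proper subspaces, so it is spanned by one vector, and by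
Nakayama `M` is cyclic. A cyclic module is isomorphic to `R/C`, whose `R`-submodules are exactly
the ideals of `R/C`.
-/

open Submodule IsLocalRing

section Ring

variable {R M : Type*} [Ring R] [AddCommGroup M] [Module R M]

theorem IsFiniteLength.finite (hR : ∀ I : Ideal R, I.IsMaximal → Finite (R ⧸ I))
    (h : IsFiniteLength R M) : Finite M := by
  induction h with
  | of_subsingleton => exact Finite.of_subsingleton
  | @of_simple_quotient M _ _ N _ _ ih =>
    obtain ⟨I, hI, ⟨e⟩⟩ := isSimpleModule_iff_quot_maximal.mp ‹IsSimpleModule R (M ⧸ N)›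
    have : Finite (M ⧸ N) := have := hR I hI; .of_equiv _ e.symm.toEquiv
    exact @Finite.of_addSubgroup_quotient _ _ N.toAddSubgroup ih this

theorem Finite.of_finite_submodule (hR : ∀ I : Ideal R, I.IsMaximal → Finite (R ⧸ I))
    [Finite (Submodule R M)] : Finite M :=
  (isFiniteLength_iff_isNoetherian_isArtinian.mpr
    ⟨isNoetherian_iff'.mpr inferInstance, inferInstance⟩).finite hR

end Ring

theorem Module.exists_span_singleton_eq_top_of_finite_submodule {K V : Type*} [Field K]
    [Infinite K] [AddCommGroup V] [Module K V] [Finite (Submodule K V)] :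
    ∃ x : V, span K {x} = ⊤ := by
  obtain ⟨x, hx⟩ := exists_forall_notMem_of_forall_ne_top
    (Subtype.val : {p : Submodule K V // p ≠ ⊤} → Submodule K V) Subtype.prop
  exact ⟨x, by_contra fun h ↦ hx ⟨_, h⟩ (mem_span_singleton_self x)⟩

section CommRing

variable {R M : Type*} [CommRing R] [AddCommGroup M] [Module R M]

theorem Module.finite_quotient_annihilator [Finite M] : Finite (R ⧸ Module.annihilator R M) :=
  have : Finite (AddMonoid.End M) := .of_injective _ DFunLike.coe_injective
  .of_injective _ (RingHom.kerLift_injective (Module.toAddMonoidEnd R M))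

theorem Module.finite_of_finite_quotient_annihilator [Module.Finite R M]
    [Finite (R ⧸ Module.annihilator R M)] : Finite M :=
  letI := (Module.isTorsionBySet_annihilator R M).module
  have := (Module.isTorsionBySet_annihilator R M).isScalarTower (S := R)
  have := Module.Finite.of_restrictScalars_finite R (R ⧸ Module.annihilator R M) M
  Module.finite_of_finite (R ⧸ Module.annihilator R M)

theorem Ideal.Quotient.finite_of_finite_ideal (hR : ∀ J : Ideal R, J.IsMaximal → Finite (R ⧸ J))
    (I : Ideal R) [Finite (Ideal (R ⧸ I))] : Finite (R ⧸ I) :=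
  have : Finite (Submodule R (R ⧸ I)) := .of_equiv _
    (orderIsoOfAlgebraMapSurjective (S := R ⧸ I) (M := R ⧸ I) Ideal.Quotient.mk_surjective).toEquiv
  .of_finite_submodule hR

theorem Module.finite_submodule_iff_finite_ideal_of_span_singleton_eq_top {e : M}
    (he : span R {e} = ⊤) :
    Finite (Submodule R M) ↔ Finite (Ideal (R ⧸ Module.annihilator R M)) := by
  have hker : LinearMap.ker (LinearMap.toSpanSingleton R M e) = Module.annihilator R M := by
    rw [← annihilator_top, ← he, annihilator_span_singleton]
  have hsurj : Function.Surjective (LinearMap.toSpanSingleton R M e) := by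
    rw [← LinearMap.range_eq_top, ← LinearMap.span_singleton_eq_range, he]
  let φ : M ≃ₗ[R] R ⧸ Module.annihilator R M :=
    (LinearMap.quotKerEquivOfSurjective _ hsurj).symm ≪≫ₗ quotEquivOfEq _ _ hker
  exact ((orderIsoMapComap φ).trans
    (orderIsoOfAlgebraMapSurjective Ideal.Quotient.mk_surjective).symm).toEquiv.finite_iff

theorem IsLocalRing.exists_span_singleton_eq_top_of_finite_submodule [IsLocalRing R]
    [Infinite (R ⧸ maximalIdeal R)] [Module.Finite R M] [Finite (Submodule R M)] :
    ∃ e : M, span R {e} = ⊤ := by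
  let := Ideal.Quotient.field (maximalIdeal R)
  set N := maximalIdeal R • (⊤ : Submodule R M)
  have : Finite (Submodule (R ⧸ maximalIdeal R) (M ⧸ N)) :=
    have : Finite (Submodule R (M ⧸ N)) :=
      .of_injective _ (comap_injective_of_surjective N.mkQ_surjective)
    .of_equiv _ (orderIsoOfAlgebraMapSurjective Ideal.Quotient.mk_surjective).toEquiv.symm
  obtain ⟨x, hx⟩ :=
    Module.exists_span_singleton_eq_top_of_finite_submodule (K := R ⧸ maximalIdeal R) (V := M ⧸ N)
  obtain ⟨e, rfl⟩ := N.mkQ_surjective x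
  refine ⟨e, map_mkQ_eq_top.mp ?_⟩
  rw [map_span, Set.image_singleton, ← restrictScalars_span R (R ⧸ maximalIdeal R)
    Ideal.Quotient.mk_surjective, hx, restrictScalars_top]

end CommRing

/-- Let `(R, P)` be a quasi-local ring, `M` an `R`-module and `C := (0:M)` its annihilator.
Then `M` has only finitely many `R`-submodules iff (1) `M` is finitely generated, and cyclic
when the residue field `R/P` is infinite, and (2) `R/C` has only finitely many ideals. -/
theorem fms_module_local_iff (R M : Type*) [CommRing R] [IsLocalRing R]
    [AddCommGroup M] [Module R M] :
    Finite (Submodule R M) ↔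
      (Module.Finite R M ∧
          (Infinite (R ⧸ IsLocalRing.maximalIdeal R) →
            ∃ e : M, Submodule.span R {e} = ⊤)) ∧
        Finite (Ideal (R ⧸ (⊤ : Submodule R M).annihilator)) := by
  rw [annihilator_top]
  have hR (hk : Finite (R ⧸ maximalIdeal R)) (I : Ideal R) (hI : I.IsMaximal) : Finite (R ⧸ I) :=
    eq_maximalIdeal hI ▸ hk
  constructor
  · intro hM
    have : IsNoetherian R M := isNoetherian_iff'.mpr inferInstance
    have hcyc (_ : Infinite (R ⧸ maximalIdeal R)) : ∃ e : M, span R {e} = ⊤ :=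
      exists_span_singleton_eq_top_of_finite_submodule
    refine ⟨⟨inferInstance, hcyc⟩, ?_⟩
    rcases finite_or_infinite (R ⧸ maximalIdeal R) with hk | hk
    · have : Finite M := .of_finite_submodule (hR hk)
      have := Module.finite_quotient_annihilator (R := R) (M := M)
      infer_instance
    · obtain ⟨e, he⟩ := hcyc hk
      exact (Module.finite_submodule_iff_finite_ideal_of_span_singleton_eq_top he).mp hM
  · rintro ⟨⟨hfg, hcyc⟩, hC⟩
    rcases finite_or_infinite (R ⧸ maximalIdeal R) with hk | hk
    · have := Ideal.Quotient.finite_of_finite_ideal (hR hk) (Module.annihilator R M)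
      have : Finite M := Module.finite_of_finite_quotient_annihilator (R := R)
      exact .of_injective _ SetLike.coe_injective
    · obtain ⟨e, he⟩ := hcyc hk
      exact (Module.finite_submodule_iff_finite_ideal_of_span_singleton_eq_top he).mpr hC
end

section
/- Let R be a commutative ring. Then every finitely generated R-module is an FMS module (has only finitely many R-submodules) if and only if R is a finite ring. -/
/-!
The cyclic submodules `R ∙ (1, a)` of `R × R` are pairwise distinct, so if `R × R` has only
finitely many submodules then `R` is finite. Conversely, a finitely generated module over a
finite ring is a finite set, and so has finitely many subsets.
-/

universe u

theorem Submodule.span_singleton_one_prod_injective (R : Type*) [Semiring R] :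
    Function.Injective fun a : R => Submodule.span R {((1 : R), a)} := by
  intro a b hab
  obtain ⟨r, hr⟩ := Submodule.mem_span_singleton.mp (hab.ge (Submodule.mem_span_singleton_self _))
  have hr1 : r = 1 := by simpa using congrArg Prod.fst hr
  simpa [hr1] using congrArg Prod.snd hr

theorem finite_of_finite_submodule_prod (R : Type*) [Semiring R]
    [Finite (Submodule R (R × R))] : Finite R :=
  Finite.of_injective _ (Submodule.span_singleton_one_prod_injective R)

/-- Every finitely generated module over a commutative ring `R` has only finitely many
`R`-submodules if and only if `R` is a finite ring. -/
theorem forall_fg_fms_iff_finite (R : Type u) [CommRing R] :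
    (∀ (M : Type u) [AddCommGroup M] [Module R M],
        Module.Finite R M → Finite (Submodule R M)) ↔ Finite R := by
  refine ⟨fun h => ?_, fun _ M _ _ _ => ?_⟩
  · have := h (R × R) inferInstance
    exact finite_of_finite_submodule_prod R
  · have : Finite M := Module.finite_of_finite R
    infer_instance
end
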